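/- Let p and e be primes with p > 2 and e > 2, and let H = H(F_{p^e}) be the Heisenberg group with commutator subgroup H'. For every proper subgroup N of H' with |H' : N| = p^g, there exist g linearly independent e×e matrices L_1, …, L_g over Z_p such that H/N is isomorphic to B(L_1, …, L_g). In particular, any two quotients H/N₁ and H/N₂ with N₁, N₂ ≤ H' of index p in H' are isomorphic (all genus-1 quotients of H are isomorphic). -/

import Mathlib

/-- The Heisenberg group over a field `K`: underlying set `K × K × K` with
multiplication `(α,β,γ)·(α',β',γ') = (α+α', β+β', γ+γ'+α·β')`. -/
def Heisenberg (K : Type) [Field K] : Type := K × K × K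

namespace Heisenberg

variable {K : Type} [Field K]

instance : Mul (Heisenberg K) :=
  ⟨fun a b => (a.1 + b.1, a.2.1 + b.2.1, a.2.2 + b.2.2 + a.1 * b.2.1)⟩

instance : One (Heisenberg K) := ⟨((0 : K), (0 : K), (0 : K))⟩

instance : Inv (Heisenberg K) :=
  ⟨fun a => (-a.1, -a.2.1, -a.2.2 + a.1 * a.2.1)⟩

lemma mul_def (a b : Heisenberg K) :
    a * b = (a.1 + b.1, a.2.1 + b.2.1, a.2.2 + b.2.2 + a.1 * b.2.1) := rfl

lemma one_def : (1 : Heisenberg K) = ((0 : K), (0 : K), (0 : K)) := rfl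

lemma inv_def (a : Heisenberg K) : a⁻¹ = (-a.1, -a.2.1, -a.2.2 + a.1 * a.2.1) := rfl

instance : Group (Heisenberg K) where
  mul := (· * ·)
  one := 1
  inv := (·⁻¹)
  mul_assoc a b c := by
    show (a * b) * c = a * (b * c)
    rw [mul_def (a * b), mul_def a b, mul_def a (b * c), mul_def b c]
    refine Prod.ext ?_ (Prod.ext ?_ ?_) <;> (try dsimp only) <;> ring
  one_mul a := by
    show 1 * a = a
    simp only [mul_def]
    simp only [one_def]
    refine Prod.ext ?_ (Prod.ext ?_ ?_) <;> (try dsimp only) <;> ring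
  mul_one a := by
    show a * 1 = a
    simp only [mul_def]
    simp only [one_def]
    refine Prod.ext ?_ (Prod.ext ?_ ?_) <;> (try dsimp only) <;> ring
  inv_mul_cancel a := by
    show a⁻¹ * a = 1
    simp only [mul_def]
    simp only [one_def, inv_def]
    refine Prod.ext ?_ (Prod.ext ?_ ?_) <;> (try dsimp only) <;> ring

instance [Finite K] : Finite (Heisenberg K) := inferInstanceAs (Finite (K × K × K))

end Heisenberg

open Matrix in
/-- The Brahana-Baer group `B(L 0, …, L (t-1))` determined by a family of `r × s`
matrices over `ZMod p`: underlying set `(ZMod p)^r × (ZMod p)^s × (ZMod p)^t` with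
multiplication `(a,b,c)·(a',b',c') = (a+a', b+b', c+c'+(a L₁ b'ᵀ, …, a L_t b'ᵀ))`. -/
def BGroup (p r s t : ℕ) (L : Fin t → Matrix (Fin r) (Fin s) (ZMod p)) : Type :=
  (Fin r → ZMod p) × (Fin s → ZMod p) × (Fin t → ZMod p)

namespace BGroup

open Matrix

variable {p r s t : ℕ} {L : Fin t → Matrix (Fin r) (Fin s) (ZMod p)}

instance : Mul (BGroup p r s t L) :=
  ⟨fun x y => (x.1 + y.1, x.2.1 + y.2.1,
    fun i => x.2.2 i + y.2.2 i + x.1 ⬝ᵥ (L i).mulVec y.2.1)⟩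

instance : One (BGroup p r s t L) := ⟨(0, 0, 0)⟩

instance : Inv (BGroup p r s t L) :=
  ⟨fun x => (-x.1, -x.2.1, fun i => -x.2.2 i + x.1 ⬝ᵥ (L i).mulVec x.2.1)⟩

lemma mul_def (x y : BGroup p r s t L) :
    x * y = (x.1 + y.1, x.2.1 + y.2.1,
      fun i => x.2.2 i + y.2.2 i + x.1 ⬝ᵥ (L i).mulVec y.2.1) := rfl

lemma one_def : (1 : BGroup p r s t L) = (0, 0, 0) := rfl

lemma inv_def (x : BGroup p r s t L) :
    x⁻¹ = (-x.1, -x.2.1, fun i => -x.2.2 i + x.1 ⬝ᵥ (L i).mulVec x.2.1) := rfl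

instance : Group (BGroup p r s t L) where
  mul := (· * ·)
  one := 1
  inv := (·⁻¹)
  mul_assoc x y z := by
    show (x * y) * z = x * (y * z)
    rw [mul_def (x * y), mul_def x y, mul_def x (y * z), mul_def y z]
    refine Prod.ext ?_ (Prod.ext ?_ ?_) <;> (try dsimp only)
    · abel
    · abel
    · funext i
      simp [Matrix.mulVec_add, dotProduct_add, add_dotProduct]
      ring
  one_mul x := by
    show 1 * x = x
    simp only [mul_def]
    simp only [one_def]
    refine Prod.ext ?_ (Prod.ext ?_ ?_) <;> (try dsimp only)
    · abel
    · abel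
    · funext i
      simp [zero_dotProduct]
  mul_one x := by
    show x * 1 = x
    simp only [mul_def]
    simp only [one_def]
    refine Prod.ext ?_ (Prod.ext ?_ ?_) <;> (try dsimp only)
    · abel
    · abel
    · funext i
      simp [Matrix.mulVec_zero]
  inv_mul_cancel x := by
    show x⁻¹ * x = 1
    simp only [mul_def]
    simp only [one_def, inv_def]
    refine Prod.ext ?_ (Prod.ext ?_ ?_) <;> (try dsimp only)
    · abel
    · abel
    · funext i
      simp [neg_dotProduct]

instance [NeZero p] : Finite (BGroup p r s t L) :=
  inferInstanceAs (Finite (_ × _ × _))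

end BGroup

/-! The commutator subgroup `H' = {(0, 0, γ)}` is a copy of the additive group of `K`, so a
subgroup `N ≤ H'` of index `p ^ g` is an `𝔽_p`-subspace `W ≤ K` of codimension `g`. In bases
of `K` and `K ⧸ W`, the map `(α, β, γ) ↦ (α, β, γ mod W)` is a surjection `H → B(L₁, …, L_g)`
with kernel `N`, where `Lᵢ` is the Gram matrix of `(α, β) ↦ (α β mod W)ᵢ`. A nonzero combination
`∑ cᵢ Lᵢ` is the Gram matrix of `(α, β) ↦ φ (α β)` for a nonzero functional `φ`, which is
nondegenerate because `K` is a field. So the `Lᵢ` are linearly independent, and for `g = 1` the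
two matrices differ by an invertible left factor, absorbed by a change of the first coordinate. -/

open scoped commutatorElement

theorem linearIndependent_of_isUnit_sum_smul {R A ι : Type*} [Ring R] [Ring A]
    [Nontrivial A] [Module R A] [Fintype ι] {v : ι → A}
    (hv : ∀ c : ι → R, c ≠ 0 → IsUnit (∑ i, c i • v i)) : LinearIndependent R v := by
  rw [Fintype.linearIndependent_iff]
  intro c hc
  by_contra hne
  simpa [hc] using hv c (fun h => hne (by simp [h]))

theorem finrank_zmod_eq_of_natCard_eq {p n : ℕ} [Fact p.Prime] {V : Type*} [AddCommGroup V]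
    [Module (ZMod p) V] [Finite V] (h : Nat.card V = p ^ n) : Module.finrank (ZMod p) V = n :=
  Nat.pow_right_injective (Fact.out : p.Prime).two_le
    ((FiniteField.pow_finrank_eq_natCard p V).trans h)

theorem LinearMap.separatingLeft_mul_compr₂ {F K : Type*} [Field F] [Field K] [Algebra F K]
    {φ : K →ₗ[F] F} (hφ : φ ≠ 0) : ((LinearMap.mul F K).compr₂ φ).SeparatingLeft := by
  intro x hx
  by_contra hx0
  obtain ⟨γ, hγ⟩ : ∃ γ, φ γ ≠ 0 := by
    by_contra! h
    exact hφ (LinearMap.ext h)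
  exact hγ (by simpa [hx0] using hx (x⁻¹ * γ))

namespace BGroup

open Matrix

variable {p r s t : ℕ} {L L' : Fin t → Matrix (Fin r) (Fin s) (ZMod p)}

/- A raw tuple `(a, b, c)` has a product type, on which `*` is componentwise; `mk` keeps it
at the group type (likewise `Heisenberg.mk` below). -/
def mk (a : Fin r → ZMod p) (b : Fin s → ZMod p) (c : Fin t → ZMod p) : BGroup p r s t L :=
  (a, b, c)

@[ext]
theorem ext {x y : BGroup p r s t L} (h₁ : x.1 = y.1) (h₂ : x.2.1 = y.2.1) (h₃ : x.2.2 = y.2.2) :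
    x = y :=
  Prod.ext h₁ (Prod.ext h₂ h₃)

@[simp]
theorem mk_mul_mk (a a' : Fin r → ZMod p) (b b' : Fin s → ZMod p) (c c' : Fin t → ZMod p) :
    (mk a b c : BGroup p r s t L) * mk a' b' c' =
      mk (a + a') (b + b') (c + c' + fun i => a ⬝ᵥ L i *ᵥ b') :=
  rfl

@[simp]
theorem mk_inj {a a' : Fin r → ZMod p} {b b' : Fin s → ZMod p} {c c' : Fin t → ZMod p} :
    (mk a b c : BGroup p r s t L) = mk a' b' c' ↔ a = a' ∧ b = b' ∧ c = c' :=
  Prod.mk_inj.trans (and_congr_right' Prod.mk_inj)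

theorem one_eq_mk : (1 : BGroup p r s t L) = mk 0 0 0 :=
  rfl

@[simp]
theorem fst_mk (a : Fin r → ZMod p) (b : Fin s → ZMod p) (c : Fin t → ZMod p) :
    (mk a b c : BGroup p r s t L).1 = a := rfl

@[simp]
theorem fst_snd_mk (a : Fin r → ZMod p) (b : Fin s → ZMod p) (c : Fin t → ZMod p) :
    (mk a b c : BGroup p r s t L).2.1 = b := rfl

@[simp]
theorem snd_snd_mk (a : Fin r → ZMod p) (b : Fin s → ZMod p) (c : Fin t → ZMod p) :
    (mk a b c : BGroup p r s t L).2.2 = c := rfl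

def mulEquivOfEqMul (P : GL (Fin r) (ZMod p))
    (h : ∀ i, L i = (P : Matrix (Fin r) (Fin r) (ZMod p)) * L' i) :
    BGroup p r s t L ≃* BGroup p r s t L' where
  toFun x := mk (x.1 ᵥ* (P : Matrix _ _ _)) x.2.1 x.2.2
  invFun x := mk (x.1 ᵥ* (P⁻¹ : GL (Fin r) (ZMod p))) x.2.1 x.2.2
  left_inv x := by ext <;> simp [vecMul_vecMul]
  right_inv x := by ext <;> simp [vecMul_vecMul]
  map_mul' x y := by
    ext <;> simp [mul_def, add_vecMul, h, dotProduct_mulVec, vecMul_vecMul]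

theorem nonempty_mulEquiv_of_isUnit {L L' : Fin 1 → Matrix (Fin r) (Fin r) (ZMod p)}
    (h : IsUnit (L 0)) (h' : IsUnit (L' 0)) :
    Nonempty (BGroup p r r 1 L ≃* BGroup p r r 1 L') := by
  obtain ⟨u, hu⟩ := h
  obtain ⟨u', hu'⟩ := h'
  refine ⟨mulEquivOfEqMul (u * u'⁻¹) fun i => ?_⟩
  rw [Subsingleton.elim i 0, ← hu, ← hu', ← Units.val_mul, inv_mul_cancel_right]

end BGroup

namespace Heisenberg

variable {K : Type} [Field K]

def mk (a b c : K) : Heisenberg K :=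
  (a, b, c)

@[simp]
theorem mk_mul_mk (a b c a' b' c' : K) :
    mk a b c * mk a' b' c' = mk (a + a') (b + b') (c + c' + a * b') :=
  rfl

@[simp]
theorem inv_mk (a b c : K) : (mk a b c)⁻¹ = mk (-a) (-b) (-c + a * b) :=
  rfl

@[simp]
theorem mk_inj {a b c a' b' c' : K} : mk a b c = mk a' b' c' ↔ a = a' ∧ b = b' ∧ c = c' :=
  Prod.mk_inj.trans (and_congr_right' Prod.mk_inj)

theorem mk_eta (x : Heisenberg K) : mk x.1 x.2.1 x.2.2 = x :=
  rfl

theorem commutatorElement_mk (a b c a' b' c' : K) :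
    ⁅mk a b c, mk a' b' c'⁆ = mk 0 0 (a * b' - a' * b) := by
  simp only [commutatorElement_def, mk_mul_mk, inv_mk, mk_inj]
  refine ⟨by ring, by ring, by ring⟩

def central : Multiplicative K →* Heisenberg K where
  toFun γ := mk 0 0 γ.toAdd
  map_one' := rfl
  map_mul' γ δ := by simp

@[simp]
theorem central_apply (γ : Multiplicative K) : central γ = mk 0 0 γ.toAdd :=
  rfl

theorem range_central : (central : Multiplicative K →* Heisenberg K).range =
    commutator (Heisenberg K) := by
  apply le_antisymm
  · rintro _ ⟨γ, rfl⟩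
    have : central γ = ⁅mk (1 : K) 0 0, mk 0 γ.toAdd 0⁆ := by
      simp [commutatorElement_mk]
    rw [this, commutator_def]
    exact Subgroup.commutator_mem_commutator (Subgroup.mem_top _) (Subgroup.mem_top _)
  · rw [commutator_def, Subgroup.commutator_le]
    intro g _ h _
    rw [← mk_eta g, ← mk_eta h, commutatorElement_mk]
    exact ⟨Multiplicative.ofAdd _, rfl⟩

end Heisenberg

noncomputable section

namespace Heisenberg

open Matrix

variable {p : ℕ} {K : Type} [Field K] [Algebra (ZMod p) K] {r t : ℕ}
  (bK : Module.Basis (Fin r) (ZMod p) K) (f : K →ₗ[ZMod p] Fin t → ZMod p)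

def brahanaMatrices : Fin t → Matrix (Fin r) (Fin r) (ZMod p) :=
  fun i => LinearMap.toMatrix₂ bK bK ((LinearMap.mul (ZMod p) K).compr₂ (LinearMap.proj i ∘ₗ f))

theorem apply_mul_eq_dotProduct_brahanaMatrices (α β : K) (i : Fin t) :
    f (α * β) i = bK.repr α ⬝ᵥ brahanaMatrices bK f i *ᵥ bK.repr β := by
  simpa [brahanaMatrices] using apply_eq_dotProduct_toMatrix₂_mulVec bK bK
    ((LinearMap.mul (ZMod p) K).compr₂ (LinearMap.proj i ∘ₗ f)) α β

theorem sum_smul_brahanaMatrices (c : Fin t → ZMod p) :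
    ∑ i, c i • brahanaMatrices bK f i = LinearMap.toMatrix₂ bK bK
      ((LinearMap.mul (ZMod p) K).compr₂ (∑ i, c i • LinearMap.proj i ∘ₗ f)) := by
  ext j k
  simp [brahanaMatrices, LinearMap.toMatrix₂_apply, Matrix.sum_apply]

theorem isUnit_sum_smul_brahanaMatrices [Fact p.Prime] (hf : Function.Surjective f)
    (c : Fin t → ZMod p) (hc : c ≠ 0) : IsUnit (∑ i, c i • brahanaMatrices bK f i) := by
  obtain ⟨i₀, hi₀⟩ := Function.ne_iff.mp hc
  obtain ⟨γ, hγ⟩ := hf (Pi.single i₀ 1)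
  have hφ : ∑ i, c i • LinearMap.proj i ∘ₗ f ≠ 0 := fun h => hi₀ <| by
    simpa [hγ, Pi.single_apply] using LinearMap.congr_fun h γ
  rw [sum_smul_brahanaMatrices, Matrix.isUnit_iff_isUnit_det, isUnit_iff_ne_zero,
    ← Matrix.separatingLeft_iff_det_ne_zero, LinearMap.separatingLeft_toMatrix₂_iff]
  exact LinearMap.separatingLeft_mul_compr₂ hφ

def toBGroup : Heisenberg K →* BGroup p r r t (brahanaMatrices bK f) where
  toFun x := BGroup.mk (bK.repr x.1) (bK.repr x.2.1) (f x.2.2)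
  map_one' := by ext <;> simp [one_def, BGroup.one_def]
  map_mul' x y := by
    ext i
    · simp [mul_def]
    · simp [mul_def]
    · simpa [mul_def] using apply_mul_eq_dotProduct_brahanaMatrices bK f x.1 y.2.1 i

theorem toBGroup_surjective (hf : Function.Surjective f) :
    Function.Surjective (toBGroup bK f) := by
  intro z
  obtain ⟨γ, hγ⟩ := hf z.2.2
  exact ⟨mk (bK.equivFun.symm z.1) (bK.equivFun.symm z.2.1) γ,
    BGroup.ext (bK.equivFun.apply_symm_apply z.1) (bK.equivFun.apply_symm_apply z.2.1) hγ⟩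

theorem toBGroup_mk (a b c : K) :
    toBGroup bK f (mk a b c) = BGroup.mk (bK.repr a) (bK.repr b) (f c) :=
  rfl

theorem ker_toBGroup :
    (toBGroup bK f).ker = (LinearMap.ker f).toAddSubgroup.toSubgroup.map central := by
  ext x
  rw [← mk_eta x, MonoidHom.mem_ker, toBGroup_mk, BGroup.one_eq_mk]
  simp [eq_comm (a := (0 : K)), and_comm, and_assoc]

theorem exists_mulEquiv_bGroup {p e g : ℕ} (hp : p.Prime) {K : Type} [Field K]
    [Fintype K] (hK : Fintype.card K = p ^ e) (N : Subgroup (Heisenberg K)) [N.Normal]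
    (hN : N ≤ commutator (Heisenberg K))
    (hidx : N.relIndex (commutator (Heisenberg K)) = p ^ g) :
    ∃ L : Fin g → Matrix (Fin e) (Fin e) (ZMod p),
      (∀ c : Fin g → ZMod p, c ≠ 0 → IsUnit (∑ i, c i • L i)) ∧
      Nonempty ((Heisenberg K ⧸ N) ≃* BGroup p e e g L) := by
  have := Fact.mk hp
  have := charP_of_card_eq_prime_pow hK
  let := ZMod.algebra K p
  let bK : Module.Basis (Fin e) (ZMod p) K := Module.finBasisOfFinrankEq _ _
    (finrank_zmod_eq_of_natCard_eq (by rwa [Nat.card_eq_fintype_card]))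
  let W : Submodule (ZMod p) K :=
    AddSubgroup.toZModSubmodule p (N.comap central).toAddSubgroup'
  have hW : Nat.card (K ⧸ W) = p ^ g := by
    rw [← hidx, ← range_central, ← Subgroup.index_comap]
    -- `K ⧸ W` is, by definition, the quotient of `Multiplicative K` by `N.comap central`
    rfl
  let bQ : Module.Basis (Fin g) (ZMod p) (K ⧸ W) := Module.finBasisOfFinrankEq _ _
    (finrank_zmod_eq_of_natCard_eq hW)
  let f : K →ₗ[ZMod p] Fin g → ZMod p := bQ.equivFun.toLinearMap ∘ₗ W.mkQ
  have hf : Function.Surjective f := bQ.equivFun.surjective.comp W.mkQ_surjective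
  have hker : (toBGroup bK f).ker = N := by
    rw [ker_toBGroup, LinearEquiv.ker_comp, Submodule.ker_mkQ]
    exact Subgroup.map_comap_eq_self (range_central (K := K) ▸ hN)
  exact ⟨_, isUnit_sum_smul_brahanaMatrices bK f hf,
    ⟨(QuotientGroup.quotientMulEquivOfEq hker.symm).trans
      (QuotientGroup.quotientKerEquivOfSurjective _ (toBGroup_surjective bK f hf))⟩⟩

end Heisenberg

end

theorem heisenberg_quotient_brahana_general
    (p e : ℕ) (hp : p.Prime)
    (K : Type) [Field K] [Fintype K] (hK : Fintype.card K = p ^ e) :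
    (∀ (N : Subgroup (Heisenberg K)) (hn : N.Normal) (g : ℕ),
      N < commutator (Heisenberg K) →
      N.relIndex (commutator (Heisenberg K)) = p ^ g →
      ∃ L : Fin g → Matrix (Fin e) (Fin e) (ZMod p),
        LinearIndependent (ZMod p) L ∧
        Nonempty ((Heisenberg K ⧸ N) ≃* BGroup p e e g L)) ∧
    (∀ (N₁ N₂ : Subgroup (Heisenberg K)) (hn₁ : N₁.Normal) (hn₂ : N₂.Normal),
      N₁ ≤ commutator (Heisenberg K) → N₂ ≤ commutator (Heisenberg K) →
      N₁.relIndex (commutator (Heisenberg K)) = p →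
      N₂.relIndex (commutator (Heisenberg K)) = p →
      Nonempty ((Heisenberg K ⧸ N₁) ≃* (Heisenberg K ⧸ N₂))) := by
  have := Fact.mk hp
  have : NeZero e := ⟨by rintro rfl; simpa [hK] using Fintype.one_lt_card (α := K)⟩
  refine ⟨fun N _ g hN hidx => ?_, fun N₁ N₂ _ _ hN₁ hN₂ hidx₁ hidx₂ => ?_⟩
  · obtain ⟨L, hL, hiso⟩ := Heisenberg.exists_mulEquiv_bGroup hp hK N hN.le hidx
    exact ⟨L, linearIndependent_of_isUnit_sum_smul hL, hiso⟩
  · have isUnit_zero {L : Fin 1 → Matrix (Fin e) (Fin e) (ZMod p)}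
        (hL : ∀ c : Fin 1 → ZMod p, c ≠ 0 → IsUnit (∑ i, c i • L i)) : IsUnit (L 0) := by
      simpa using hL 1 one_ne_zero
    obtain ⟨L₁, hL₁, ⟨φ₁⟩⟩ :=
      Heisenberg.exists_mulEquiv_bGroup hp hK N₁ hN₁ (by rw [hidx₁, pow_one])
    obtain ⟨L₂, hL₂, ⟨φ₂⟩⟩ :=
      Heisenberg.exists_mulEquiv_bGroup hp hK N₂ hN₂ (by rw [hidx₂, pow_one])
    obtain ⟨ψ⟩ := BGroup.nonempty_mulEquiv_of_isUnit (isUnit_zero hL₁) (isUnit_zero hL₂)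
    exact ⟨φ₁.trans (ψ.trans φ₂.symm)⟩

/-- **Brahana correspondence.** For every proper subgroup `N` of the
commutator subgroup `H'` of the Heisenberg group `H = H(F_{p^e})` with
`|H' : N| = p^g`, there are `g` linearly independent `e × e` matrices `L` over `Z_p`
with `H/N ≅ B(L 0, …, L (g-1))`.  In particular all genus-1 quotients of `H`
(those with `|H' : N| = p`) are isomorphic. -/
theorem heisenberg_quotient_brahana
    (p e : ℕ) (hp : p.Prime) (he : e.Prime) (hp2 : 2 < p) (he2 : 2 < e)
    (K : Type) [Field K] [Fintype K] (hK : Fintype.card K = p ^ e) :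
    (∀ (N : Subgroup (Heisenberg K)) (hn : N.Normal) (g : ℕ),
      N < commutator (Heisenberg K) →
      N.relIndex (commutator (Heisenberg K)) = p ^ g →
      ∃ L : Fin g → Matrix (Fin e) (Fin e) (ZMod p),
        LinearIndependent (ZMod p) L ∧
        Nonempty ((Heisenberg K ⧸ N) ≃* BGroup p e e g L)) ∧
    (∀ (N₁ N₂ : Subgroup (Heisenberg K)) (hn₁ : N₁.Normal) (hn₂ : N₂.Normal),
      N₁ ≤ commutator (Heisenberg K) → N₂ ≤ commutator (Heisenberg K) →
      N₁.relIndex (commutator (Heisenberg K)) = p →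
      N₂.relIndex (commutator (Heisenberg K)) = p →
      Nonempty ((Heisenberg K ⧸ N₁) ≃* (Heisenberg K ⧸ N₂))) :=
  heisenberg_quotient_brahana_general p e hp K hK
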